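/- Let s, t, t' be nonnegative integrable functions on a measure space (𝒳, 𝒜, μ), let r = (t+t')/2, and define ψ(t,t',x) = (1/√2)[√(t'(x)/(t(x)+t'(x))) − √(t(x)/(t(x)+t'(x)))]. Then ∫ ψ(t,t',x)² s(x) dμ(x) ≤ 3[H²(s,t) + H²(s,t')], where H²(u,v) = (1/2)∫(√u−√v)² dμ. -/

import Mathlib

/-!
Pointwise, with `c = √s`, `u = √t`, `v = √t'`, the integrand on the left is
`(v - u)² c² / (2 (u² + v²))`, and the polynomial inequality
`(v - u)² c² ≤ 3 (u² + v²) ((c - u)² + (c - v)²)` bounds it by `3/2 ((c - u)² + (c - v)²)`.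
Integrating this bound gives the claim.
-/

open MeasureTheory

theorem sq_sub_mul_sq_le_three_mul (c u v : ℝ) :
    (v - u) ^ 2 * c ^ 2 ≤ 3 * (u ^ 2 + v ^ 2) * ((c - u) ^ 2 + (c - v) ^ 2) := by
  nlinarith [sq_nonneg (u * v - c * c), sq_nonneg (c * (u + v) - 2 * u * v)]

/-- The paper's `ψ(t, t', x)`, as a function of the values `a = t x`, `b = t' x`. -/
noncomputable def psi (a b : ℝ) : ℝ :=
  1 / √2 * (√(b / (a + b)) - √(a / (a + b)))

theorem psi_sq_mul_le {s a b : ℝ} (hs : 0 ≤ s) (ha : 0 ≤ a) (hb : 0 ≤ b) :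
    psi a b ^ 2 * s ≤ 3 / 2 * ((√s - √a) ^ 2 + (√s - √b) ^ 2) := by
  have hsum : √(a + b) ^ 2 = √a ^ 2 + √b ^ 2 := by
    rw [Real.sq_sqrt ha, Real.sq_sqrt hb, Real.sq_sqrt (add_nonneg ha hb)]
  have hpsi : psi a b ^ 2 * s = (√b - √a) ^ 2 * √s ^ 2 / (2 * (√a ^ 2 + √b ^ 2)) := by
    rw [psi, Real.sqrt_div hb, Real.sqrt_div ha, ← hsum, Real.sq_sqrt hs, div_sub_div_same,
      mul_pow, div_pow, div_pow, Real.sq_sqrt zero_le_two]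
    ring
  -- `div_le_of_le_mul₀` also covers `a = b = 0`, where both divisions are the junk `x / 0 = 0`.
  rw [hpsi]
  refine div_le_of_le_mul₀ (by positivity) (by positivity) ?_
  nlinarith [sq_sub_mul_sq_le_three_mul √s √a √b]

theorem integrable_sq_sqrt_sub_sqrt {X : Type*} [MeasurableSpace X] {μ : Measure X}
    {f g : X → ℝ} (hf0 : ∀ x, 0 ≤ f x) (hg0 : ∀ x, 0 ≤ g x)
    (hf : Integrable f μ) (hg : Integrable g μ) :
    Integrable (fun x ↦ (√(f x) - √(g x)) ^ 2) μ := by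
  refine ((hf.const_mul 2).add (hg.const_mul 2)).mono' ?_ (.of_forall fun x ↦ ?_)
  · exact ((hf.aemeasurable.sqrt.sub hg.aemeasurable.sqrt).pow_const 2).aestronglyMeasurable
  · rw [Real.norm_eq_abs, abs_of_nonneg (sq_nonneg _), Pi.add_apply]
    nlinarith [Real.sq_sqrt (hf0 x), Real.sq_sqrt (hg0 x), sq_nonneg (√(f x) + √(g x))]

/-- With `ψ(t,t',x) = (1/√2)[√(t'(x)/(t(x)+t'(x))) − √(t(x)/(t(x)+t'(x)))]`, one has
`∫ ψ(t,t',x)² s(x) dμ(x) ≤ 3[H²(s,t) + H²(s,t')]`. -/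
theorem stmt_7 {𝒳 : Type*} [MeasurableSpace 𝒳] (μ : Measure 𝒳) (s t t' : 𝒳 → ℝ)
    (hs : ∀ x, 0 ≤ s x) (ht : ∀ x, 0 ≤ t x) (ht' : ∀ x, 0 ≤ t' x)
    (hsi : Integrable s μ) (hti : Integrable t μ) (ht'i : Integrable t' μ) :
    (∫ x, ((1 / Real.sqrt 2) * (Real.sqrt (t' x / (t x + t' x))
          - Real.sqrt (t x / (t x + t' x))))^2 * s x ∂μ)
      ≤ 3 * ((1/2) * (∫ x, (Real.sqrt (s x) - Real.sqrt (t x))^2 ∂μ)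
          + (1/2) * (∫ x, (Real.sqrt (s x) - Real.sqrt (t' x))^2 ∂μ)) := by
  have hst := integrable_sq_sqrt_sub_sqrt hs ht hsi hti
  have hst' := integrable_sq_sqrt_sub_sqrt hs ht' hsi ht'i
  -- The left integrand is nonnegative, so its integrability is not needed.
  calc _ ≤ ∫ x, 3 / 2 * ((√(s x) - √(t x)) ^ 2 + (√(s x) - √(t' x)) ^ 2) ∂μ :=
        integral_mono_of_nonneg (.of_forall fun x ↦ by have := hs x; positivity)
          ((hst.add hst').const_mul _)
          (.of_forall fun x ↦ psi_sq_mul_le (hs x) (ht x) (ht' x))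
    _ = _ := by rw [integral_const_mul, integral_add hst hst']; ring
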